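/- arXiv:1710.04533 — 7 statements merged into one kernel-verified Lean document; each statement's English description precedes it below -/
import Mathlib

section
/- Let a₁, a₂ : Fin r → ℕ be coefficient vectors and b₁, b₂ : ℕ be strictly positive. Let t₁, t₂ be positive integers such that (1) t₁ and t₂ are coprime, (2) t₁ does not divide b₂ and t₂ does not divide b₁, and (3) t₁ > b₂ - a₂* and t₂ > b₁ - a₁*, where aᵢ* denotes the smallest nonzero coefficient among aᵢ₁,…,aᵢᵣ (assume each row has a nonzero coefficient). Then for every x : Fin r → ℕ, the pair of equations (∑ j, a₁ j * x j = b₁ and ∑ j, a₂ j * x j = b₂) holds if and only if the single aggregated equation t₁ * (∑ j, a₁ j * x j) + t₂ * (∑ j, a₂ j * x j) = t₁ * b₁ + t₂ * b₂ holds. -/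
lemma gw_aux {r : ℕ} (a x : Fin r → ℕ) (s : ℕ)
    (hs : ∀ j, a j ≠ 0 → s ≤ a j) (h : ∑ j, a j * x j ≠ 0) :
    s ≤ ∑ j, a j * x j := by
  obtain ⟨j, hj, hj0⟩ := Finset.exists_ne_zero_of_sum_ne_zero h
  have ha : a j ≠ 0 := fun h0 => hj0 (by simp [h0])
  have hx : x j ≠ 0 := fun h0 => hj0 (by simp [h0])
  calc s ≤ a j := hs j ha
    _ ≤ a j * x j := Nat.le_mul_of_pos_right _ (Nat.pos_of_ne_zero hx)
    _ ≤ ∑ j, a j * x j :=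
        Finset.single_le_sum (f := fun j => a j * x j) (fun i _ => Nat.zero_le _) (Finset.mem_univ j)

/-- Glover–Woolsey aggregation lemma for two linear diophantine equations. -/
theorem glover_woolsey_aggregation
    (r : ℕ) (a₁ a₂ : Fin r → ℕ) (b₁ b₂ : ℕ)
    (hb₁ : 0 < b₁) (hb₂ : 0 < b₂)
    (a₁s a₂s : ℕ)
    (ha₁s : (∃ j, a₁ j = a₁s) ∧ 0 < a₁s ∧ ∀ j, a₁ j ≠ 0 → a₁s ≤ a₁ j)
    (ha₂s : (∃ j, a₂ j = a₂s) ∧ 0 < a₂s ∧ ∀ j, a₂ j ≠ 0 → a₂s ≤ a₂ j)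
    (t₁ t₂ : ℕ) (ht₁ : 0 < t₁) (ht₂ : 0 < t₂)
    (hcop : Nat.Coprime t₁ t₂)
    (hnd₁ : ¬ t₁ ∣ b₂) (hnd₂ : ¬ t₂ ∣ b₁)
    (hgt₁ : t₁ > b₂ - a₂s) (hgt₂ : t₂ > b₁ - a₁s) :
    ∀ x : Fin r → ℕ,
      ((∑ j, a₁ j * x j = b₁) ∧ (∑ j, a₂ j * x j = b₂)) ↔
        t₁ * (∑ j, a₁ j * x j) + t₂ * (∑ j, a₂ j * x j) = t₁ * b₁ + t₂ * b₂ := by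
  intro x
  set S₁ := ∑ j, a₁ j * x j with hS₁
  set S₂ := ∑ j, a₂ j * x j with hS₂
  constructor
  · rintro ⟨h1, h2⟩; rw [h1, h2]
  · intro h
    rcases le_or_gt b₁ S₁ with hle | hlt
    · -- S₁ ≥ b₁, hence S₂ ≤ b₂
      have hm1 : t₁ * b₁ ≤ t₁ * S₁ := Nat.mul_le_mul_left _ hle
      have hS2le : S₂ ≤ b₂ := by
        have : t₂ * S₂ ≤ t₂ * b₂ := by omega
        exact Nat.le_of_mul_le_mul_left this ht₂
      obtain ⟨u, hu⟩ : ∃ u, S₁ = b₁ + u := ⟨S₁ - b₁, by omega⟩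
      obtain ⟨v, hv⟩ : ∃ v, b₂ = S₂ + v := ⟨b₂ - S₂, by omega⟩
      have key : t₁ * u = t₂ * v := by
        rw [hu, hv, Nat.mul_add, Nat.mul_add] at h; omega
      rcases Nat.eq_zero_or_pos u with h0 | hpos
      · subst h0
        simp at key
        have hv0 : v = 0 := by
          rcases key with h' | h' <;> omega
        constructor <;> omega
      · -- v > 0, t₁ ∣ v
        have hvdvd : t₁ ∣ v := by
          have : t₁ ∣ t₂ * v := key ▸ Dvd.intro u rfl
          exact hcop.dvd_of_dvd_mul_left this
        have hvpos : 0 < v := by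
          rcases Nat.eq_zero_or_pos v with h' | h'
          · exfalso; rw [h', Nat.mul_zero] at key
            rcases Nat.mul_eq_zero.mp key with h'' | h'' <;> omega
          · exact h'
        have hvge : t₁ ≤ v := Nat.le_of_dvd hvpos hvdvd
        rcases Nat.eq_zero_or_pos S₂ with hs0 | hsp
        · exfalso; apply hnd₁
          have : v = b₂ := by omega
          exact this ▸ hvdvd
        · exfalso
          have := gw_aux a₂ x a₂s ha₂s.2.2 (by omega)
          omega
    · -- S₁ < b₁, hence S₂ ≥ b₂
      have hm1 : t₁ * S₁ ≤ t₁ * b₁ := Nat.mul_le_mul_left _ hlt.le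
      have hS2ge : b₂ ≤ S₂ := by
        have : t₂ * b₂ ≤ t₂ * S₂ := by omega
        exact Nat.le_of_mul_le_mul_left this ht₂
      obtain ⟨u, hu⟩ : ∃ u, b₁ = S₁ + u := ⟨b₁ - S₁, by omega⟩
      obtain ⟨v, hv⟩ : ∃ v, S₂ = b₂ + v := ⟨S₂ - b₂, by omega⟩
      have key : t₁ * u = t₂ * v := by
        rw [hu, hv, Nat.mul_add, Nat.mul_add] at h; omega
      have hupos : 0 < u := by omega
      have hudvd : t₂ ∣ u := by
        have : t₂ ∣ t₁ * u := key ▸ Dvd.intro v rfl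
        exact (Nat.Coprime.dvd_of_dvd_mul_left (hcop.symm) this)
      have huge : t₂ ≤ u := Nat.le_of_dvd hupos hudvd
      rcases Nat.eq_zero_or_pos S₁ with hs0 | hsp
      · exfalso; apply hnd₂
        have : u = b₁ := by omega
        exact this ▸ hudvd
      · exfalso
        have := gw_aux a₁ x a₁s ha₁s.2.2 (by omega)
        omega
end

section
/- Let A : Matrix (Fin m) (Fin r) ℕ and b : Fin m → ℕ with b i > 0 for all i, and assume every row of A has a nonzero entry. Then there exist positive integers t : Fin m → ℕ such that for all x : Fin r → ℕ, A.mulVec x = b if and only if ∑ i, t i * (∑ j, A i j * x j) = ∑ i, t i * b i. -/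
/-- Glover–Woolsey pair aggregation, key step (in ℤ, with nonnegativity). -/
lemma gw_pair (F G B D : ℕ)
    (h : (D + 1) * F + ((D + 1) * B + 1) * G
        = (D + 1) * B + ((D + 1) * B + 1) * D) :
    F = B ∧ G = D := by
  -- work in ℤ
  set s1 : ℤ := (D : ℤ) + 1 with hs1
  set s2 : ℤ := s1 * B + 1 with hs2
  have h' : s1 * F + s2 * G = s1 * B + s2 * D := by
    have := congrArg (fun n : ℕ => (n : ℤ)) h
    push_cast at this
    push_cast [hs1, hs2]
    linarith
  have key : s1 * ((F : ℤ) - B) = s2 * ((D : ℤ) - G) := by ring_nf; linarith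
  have hdvd : s1 ∣ ((D : ℤ) - G) := by
    have h1 : s1 ∣ s2 * ((D : ℤ) - G) := ⟨(F : ℤ) - B, key.symm⟩
    have h2 : s1 ∣ (s2 - 1) * ((D : ℤ) - G) := ⟨(B : ℤ) * ((D : ℤ) - G), by rw [hs2]; ring⟩
    have := dvd_sub h1 h2
    simpa [sub_mul] using this
  obtain ⟨k, hk⟩ := hdvd
  have hs1pos : (0 : ℤ) < s1 := by positivity
  have hGD : (G : ℤ) = D := by
    rcases lt_trichotomy k 0 with hkneg | hk0 | hkpos
    · -- k ≤ -1 : D - G ≤ -s1, leading to F < 0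
      exfalso
      have hk1 : k ≤ -1 := by omega
      have hDG : (D : ℤ) - G ≤ -s1 := by
        calc (D : ℤ) - G = s1 * k := hk
          _ ≤ s1 * (-1) := by exact mul_le_mul_of_nonneg_left hk1 (le_of_lt hs1pos)
          _ = -s1 := by ring
      have hs2pos : (0 : ℤ) < s2 := by positivity
      have : s1 * ((F : ℤ) - B) ≤ s2 * (-s1) :=
        key.trans_le (mul_le_mul_of_nonneg_left hDG (le_of_lt hs2pos))
      have hFB : (F : ℤ) - B ≤ -s2 := by
        have h3 : s1 * ((F : ℤ) - B) ≤ s1 * (-s2) := by nlinarith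
        exact le_of_mul_le_mul_left h3 hs1pos
      have hF0 : (0 : ℤ) ≤ F := by positivity
      have : s2 ≤ (B : ℤ) := by linarith
      have : (B : ℤ) + 1 ≤ s2 := by
        rw [hs2, hs1]
        nlinarith [Int.natCast_nonneg B, Int.natCast_nonneg D]
      linarith
    · have : (D : ℤ) - G = 0 := by rw [hk, hk0, mul_zero]
      linarith
    · -- k ≥ 1 : D - G ≥ s1 > D, contradiction with G ≥ 0
      exfalso
      have hk1 : (1 : ℤ) ≤ k := hkpos
      have : s1 ≤ (D : ℤ) - G := by
        calc s1 = s1 * 1 := by ring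
          _ ≤ s1 * k := mul_le_mul_of_nonneg_left hk1 (le_of_lt hs1pos)
          _ = (D : ℤ) - G := hk.symm
      have hG0 : (0 : ℤ) ≤ G := by positivity
      rw [hs1] at this
      linarith
  have hFB : (F : ℤ) = B := by
    have : s1 * ((F : ℤ) - B) = 0 := by rw [key, hGD]; ring
    rcases mul_eq_zero.mp this with h0 | h0
    · exact absurd h0 (ne_of_gt hs1pos)
    · linarith
  exact ⟨by exact_mod_cast hFB, by exact_mod_cast hGD⟩

/-- Iterated aggregation for an abstract family of equations. -/
lemma agg_exists (m : ℕ) (b : Fin m → ℕ) :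
    ∃ t : Fin m → ℕ, (∀ i, 0 < t i) ∧
      ∀ f : Fin m → ℕ, (∀ i, f i = b i) ↔ ∑ i, t i * f i = ∑ i, t i * b i := by
  induction m with
  | zero =>
    exact ⟨fun _ => 1, fun i => i.elim0, fun f => by simp [Fin.forall_fin_zero_pi]⟩
  | succ m ih =>
    obtain ⟨t', ht'pos, ht'⟩ := ih (fun i => b i.succ)
    set B := ∑ i, t' i * b (Fin.succ i) with hB
    set D := b 0 with hD
    refine ⟨Fin.cons ((D + 1) * B + 1) (fun i => (D + 1) * t' i), ?_, ?_⟩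
    · intro i
      refine Fin.cases ?_ ?_ i
      · simp
      · intro j
        simp only [Fin.cons_succ]
        exact Nat.mul_pos (Nat.succ_pos _) (ht'pos j)
    · intro f
      rw [Fin.sum_univ_succ, Fin.sum_univ_succ]
      simp only [Fin.cons_zero, Fin.cons_succ]
      have hsum : ∀ g : Fin (m + 1) → ℕ,
          ∑ i, (D + 1) * t' i * g (Fin.succ i) = (D + 1) * ∑ i, t' i * g (Fin.succ i) := by
        intro g
        rw [Finset.mul_sum]
        exact Finset.sum_congr rfl (fun i _ => by ring)
      rw [hsum f, hsum b]
      constructor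
      · intro hf
        have h1 : f 0 = D := hf 0
        have h2 : ∑ i, t' i * f (Fin.succ i) = B := by
          rw [hB]
          exact Finset.sum_congr rfl (fun i _ => by rw [hf])
        rw [h1, h2]
      · intro hsumeq
        have hpair := gw_pair (∑ i, t' i * f (Fin.succ i)) (f 0) B D
          (by rw [hD, hB] at hsumeq ⊢; linarith)
        intro i
        refine Fin.cases ?_ ?_ i
        · exact hpair.2
        · intro j
          exact (ht' (fun i => f i.succ)).mpr hpair.1 j

/-- Iterated aggregation: a system of m diophantine equations with nonnegative
coefficients and positive right-hand sides can be aggregated into one equation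
with the same nonnegative integer solutions. -/
theorem iterated_aggregation
    (m r : ℕ) (A : Matrix (Fin m) (Fin r) ℕ) (b : Fin m → ℕ)
    (hb : ∀ i, 0 < b i) (hA : ∀ i, ∃ j, A i j ≠ 0) :
    ∃ t : Fin m → ℕ, (∀ i, 0 < t i) ∧
      ∀ x : Fin r → ℕ,
        A.mulVec x = b ↔ ∑ i, t i * (∑ j, A i j * x j) = ∑ i, t i * b i := by
  obtain ⟨t, htpos, ht⟩ := agg_exists m b
  refine ⟨t, htpos, fun x => ?_⟩
  have hmv : A.mulVec x = b ↔ ∀ i, (∑ j, A i j * x j) = b i := by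
    rw [funext_iff]
    apply forall_congr'
    intro i
    rw [Matrix.mulVec, dotProduct]
  rw [hmv]
  exact ht (fun i => ∑ j, A i j * x j)
end

section
/- Let P' be a nonempty finite set of integers ≥ 2 whose greatest common divisor is 1. Then every natural number n ≥ (max P' - 1) * (min P' - 1) belongs to the additive submonoid ⟨P'⟩ of ℕ generated by P'. -/
open Pointwise

lemma gcd_cast_mem_closure (a : ℕ) (s : Finset ℕ) :
    ((s.gcd id : ℕ) : ZMod a) ∈ AddSubgroup.closure ((Nat.cast : ℕ → ZMod a) '' (s : Set ℕ)) := by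
  induction s using Finset.induction with
  | empty => simp
  | @insert p s hp ih =>
    rw [Finset.gcd_insert]
    have hbez := Nat.gcd_eq_gcd_ab p (s.gcd id)
    have heq : ((Nat.gcd p (s.gcd id) : ℕ) : ZMod a)
        = (Nat.gcdA p (s.gcd id)) • (p : ZMod a)
          + (Nat.gcdB p (s.gcd id)) • ((s.gcd id : ℕ) : ZMod a) := by
      have h2 := congrArg (fun z : ℤ => (z : ZMod a)) hbez
      push_cast at h2 ⊢
      rw [h2, zsmul_eq_mul, zsmul_eq_mul]; ring
    show ((Nat.gcd (id p) (s.gcd id) : ℕ) : ZMod a) ∈ _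
    simp only [id] at *
    rw [heq]
    apply add_mem
    · exact zsmul_mem (AddSubgroup.subset_closure (Set.mem_image_of_mem _ (by simp))) _
    · exact zsmul_mem (AddSubgroup.closure_mono (Set.image_mono (by simp)) ih) _

lemma closed_eq_univ (a : ℕ) [NeZero a] (P : Finset ℕ) (T : Finset (ZMod a))
    (h0 : (0 : ZMod a) ∈ T) (hgcd : P.gcd id = 1)
    (hcl : ∀ p ∈ P, ∀ x ∈ T, x + (p : ZMod a) ∈ T) : T = Finset.univ := by
  have hMadd : ∀ g h : ZMod a, (∀ x ∈ T, x + g ∈ T) → (∀ x ∈ T, x + h ∈ T) →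
      (∀ x ∈ T, x + (g + h) ∈ T) := by
    intro g h hg hh x hx
    rw [← add_assoc]
    exact hh _ (hg _ hx)
  have hMnsmul : ∀ g : ZMod a, (∀ x ∈ T, x + g ∈ T) → ∀ n : ℕ, ∀ x ∈ T, x + n • g ∈ T := by
    intro g hg n
    induction n with
    | zero => intro x hx; simp only [zero_smul, add_zero]; exact hx
    | succ n ih =>
      intro x hx
      rw [succ_nsmul, ← add_assoc]
      exact hg _ (ih _ hx)
  have hMneg : ∀ g : ZMod a, (∀ x ∈ T, x + g ∈ T) → (∀ x ∈ T, x + (-g) ∈ T) := by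
    intro g hg x hx
    have hzero : a • g = 0 := by
      rw [nsmul_eq_mul, ZMod.natCast_self, zero_mul]
    have : -g = (a - 1) • g := by
      have h1 : 1 ≤ a := Nat.one_le_iff_ne_zero.mpr (NeZero.ne a)
      have : (a - 1) • g + g = a • g := by
        rw [← succ_nsmul, Nat.sub_add_cancel h1]
      rw [hzero] at this
      exact neg_eq_of_add_eq_zero_left this
    rw [this]
    exact hMnsmul g hg _ x hx
  let G : AddSubgroup (ZMod a) :=
    { carrier := {g | ∀ x ∈ T, x + g ∈ T}
      zero_mem' := by intro x hx; simp only [add_zero]; exact hx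
      add_mem' := fun hg hh => hMadd _ _ hg hh
      neg_mem' := fun hg => hMneg _ hg }
  have hsub : AddSubgroup.closure ((Nat.cast : ℕ → ZMod a) '' (P : Set ℕ)) ≤ G := by
    rw [AddSubgroup.closure_le]
    rintro - ⟨p, hp, rfl⟩
    exact hcl p hp
  have h1G : (1 : ZMod a) ∈ G := by
    have := gcd_cast_mem_closure a P
    rw [hgcd] at this
    exact hsub (by simpa using this)
  apply Finset.eq_univ_iff_forall.mpr
  intro y
  have : (0 : ZMod a) + y.val • (1 : ZMod a) ∈ T :=
    hMnsmul 1 h1G y.val 0 h0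
  simpa [nsmul_eq_mul, ZMod.natCast_val] using this

/-- Frobenius-number bound: if the elements of P' are ≥ 2 and gcd(P') = 1,
every n ≥ (max P' − 1)(min P' − 1) lies in the monoid generated by P'. -/
theorem frobenius_bound
    (P' : Finset ℕ) (hne : P'.Nonempty)
    (h2 : ∀ p ∈ P', 2 ≤ p) (hgcd : P'.gcd id = 1) :
    ∀ n : ℕ, (P'.max' hne - 1) * (P'.min' hne - 1) ≤ n →
      n ∈ AddSubmonoid.closure (P' : Set ℕ) := by
  classical
  set a := P'.min' hne with ha_def
  set m := P'.max' hne with hm_def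
  have ha : a ∈ P' := P'.min'_mem hne
  have ha2 : 2 ≤ a := h2 a ha
  have ham : a ≤ m := P'.min'_le m (P'.max'_mem hne)
  have hpm : ∀ p ∈ P', p ≤ m := fun p hp => P'.le_max' p hp
  haveI : NeZero a := ⟨by omega⟩
  -- reachable residues with at most k summands
  let S : ℕ → Finset (ZMod a) := fun k =>
    Nat.rec ({0} : Finset (ZMod a)) (fun _ T => T ∪ (T + P'.image (Nat.cast : ℕ → ZMod a))) k
  have hS0 : S 0 = {0} := rfl
  have hSsucc : ∀ k, S (k + 1) = S k ∪ (S k + P'.image (Nat.cast : ℕ → ZMod a)) := fun k => rfl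
  have h0S : ∀ k, (0 : ZMod a) ∈ S k := by
    intro k
    induction k with
    | zero => simp [hS0]
    | succ k ih => rw [hSsucc]; exact Finset.mem_union_left _ ih
  -- representability
  have hrep : ∀ k, ∀ x ∈ S k, ∃ s : ℕ, s ∈ AddSubmonoid.closure (P' : Set ℕ) ∧
      s ≤ k * m ∧ (s : ZMod a) = x := by
    intro k
    induction k with
    | zero =>
      intro x hx
      rw [hS0, Finset.mem_singleton] at hx
      exact ⟨0, zero_mem _, Nat.zero_le _, by simp [hx]⟩
    | succ k ih =>
      intro x hx
      rw [hSsucc, Finset.mem_union] at hx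
      rcases hx with hx | hx
      · obtain ⟨s, hs1, hs2, hs3⟩ := ih x hx
        exact ⟨s, hs1, le_trans hs2 (mul_le_mul_left (Nat.le_succ k) m), hs3⟩
      · rw [Finset.mem_add] at hx
        obtain ⟨y, hy, z, hz, hyz⟩ := hx
        rw [Finset.mem_image] at hz
        obtain ⟨p, hp, rfl⟩ := hz
        obtain ⟨s, hs1, hs2, hs3⟩ := ih y hy
        refine ⟨s + p, add_mem hs1 (AddSubmonoid.subset_closure (by simpa using hp)), ?_, ?_⟩
        · rw [add_mul, one_mul]
          exact add_le_add hs2 (hpm p hp)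
        · push_cast
          rw [hs3]; exact hyz
  -- growth
  have hgrow : ∀ k, S k = Finset.univ ∨ k + 1 ≤ (S k).card := by
    intro k
    induction k with
    | zero => right; simp [hS0]
    | succ k ih =>
      rcases ih with ih | ih
      · left
        apply Finset.univ_subset_iff.mp
        rw [← ih, hSsucc]
        exact Finset.subset_union_left
      · rcases eq_or_ne (S (k + 1)) (S k) with heq | heq
        · left
          have hcl : ∀ p ∈ P', ∀ x ∈ S k, x + (p : ZMod a) ∈ S k := by
            intro p hp x hx
            rw [← heq, hSsucc]
            exact Finset.mem_union_right _
              (Finset.add_mem_add hx (Finset.mem_image_of_mem _ hp))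
          rw [heq]
          exact closed_eq_univ a P' (S k) (h0S k) hgcd hcl
        · right
          have hss : S k ⊂ S (k + 1) := by
            refine ⟨by rw [hSsucc]; exact Finset.subset_union_left, ?_⟩
            intro hsub
            exact heq (le_antisymm hsub (by rw [hSsucc]; exact Finset.subset_union_left))
          have := Finset.card_lt_card hss
          omega
  -- S (a-1) = univ
  have hSuniv : S (a - 1) = Finset.univ := by
    rcases hgrow (a - 1) with h | h
    · exact h
    · apply Finset.eq_univ_of_card
      have hcard : Fintype.card (ZMod a) = a := ZMod.card a
      have := Finset.card_le_univ (S (a - 1))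
      omega
  -- final assembly
  intro n hn
  have hx : (n : ZMod a) ∈ S (a - 1) := by rw [hSuniv]; exact Finset.mem_univ _
  obtain ⟨s, hs1, hs2, hs3⟩ := hrep (a - 1) _ hx
  have hmod : s ≡ n [MOD a] := (ZMod.natCast_eq_natCast_iff _ _ _).mp hs3
  have hsle : s ≤ n := by
    by_contra hlt
    push_neg at hlt
    have hdvd : a ∣ s - n := (Nat.modEq_iff_dvd' (le_of_lt hlt)).mp hmod.symm
    have hpos : s - n ≠ 0 := by omega
    have : a ≤ s - n := Nat.le_of_dvd (Nat.pos_of_ne_zero hpos) hdvd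
    have h1 : n + a ≤ (a - 1) * m := by omega
    have key : (a - 1) * m = (m - 1) * (a - 1) + (a - 1) := by
      have hm1 : m - 1 + 1 = m := by omega
      calc (a - 1) * m = (a - 1) * (m - 1 + 1) := by rw [hm1]
        _ = (a - 1) * (m - 1) + (a - 1) := by ring
        _ = (m - 1) * (a - 1) + (a - 1) := by ring
    omega
  have hdvd : a ∣ n - s := (Nat.modEq_iff_dvd' hsle).mp hmod
  obtain ⟨k, hk⟩ := hdvd
  have hn_eq : n = s + a * k := by omega
  rw [hn_eq]
  refine add_mem hs1 ?_
  have haC : (a : ℕ) ∈ AddSubmonoid.closure (P' : Set ℕ) := AddSubmonoid.subset_closure (by simpa using ha)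
  have := AddSubmonoid.nsmul_mem _ haC k
  simpa [smul_eq_mul, mul_comm] using this
end

section
/- Let P, P' be nonempty finite sets of positive natural numbers, c, c' ∈ ℕ, and let g = gcd of the elements of P and g' = gcd of the elements of P'. If c + ⟨P⟩ ⊆ c' + ⟨P'⟩, then c' ≤ c, g' divides g, and g' divides c - c'. -/
lemma gcd_dvd_of_mem_closure (P : Finset ℕ) {y : ℕ}
    (hy : y ∈ AddSubmonoid.closure (P : Set ℕ)) : P.gcd id ∣ y := by
  induction hy using AddSubmonoid.closure_induction with
  | mem x hx => exact Finset.gcd_dvd hx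
  | zero => exact dvd_zero _
  | add a b _ _ ha hb => exact dvd_add ha hb

/-- Necessary conditions for containment of 1-dimensional linear sets. -/
theorem containment_necessary_conditions
    (P P' : Finset ℕ) (hP : P.Nonempty) (hP' : P'.Nonempty)
    (hPpos : ∀ p ∈ P, 0 < p) (hP'pos : ∀ p ∈ P', 0 < p)
    (c c' : ℕ)
    (hsub : {x : ℕ | ∃ y ∈ AddSubmonoid.closure (P : Set ℕ), x = c + y} ⊆
            {x : ℕ | ∃ y ∈ AddSubmonoid.closure (P' : Set ℕ), x = c' + y}) :
    c' ≤ c ∧ P'.gcd id ∣ P.gcd id ∧ P'.gcd id ∣ c - c' := by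
  obtain ⟨y0, hy0, hc⟩ := hsub ⟨0, AddSubmonoid.zero_mem _, (add_zero c).symm⟩
  have hle : c' ≤ c := by omega
  have hdy0 : P'.gcd id ∣ y0 := gcd_dvd_of_mem_closure _ hy0
  have hdc : P'.gcd id ∣ c - c' := by
    have : c - c' = y0 := by omega
    rwa [this]
  refine ⟨hle, ?_, hdc⟩
  apply Finset.dvd_gcd
  intro p hp
  obtain ⟨y, hy, hpy⟩ := hsub ⟨p, AddSubmonoid.subset_closure hp, rfl⟩
  have hdy : P'.gcd id ∣ y := gcd_dvd_of_mem_closure _ hy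
  have : (p : ℕ) = y - y0 := by omega
  have hyy : y0 ≤ y := by omega
  simpa [id, this] using Nat.dvd_sub hdy hdy0
end

section
/- Let P be a nonempty finite set of positive natural numbers with g = gcd(P). Then every element of the additive submonoid ⟨P⟩ generated by P is a multiple of g, and there exists N such that every multiple of g that is at least N belongs to ⟨P⟩. -/
/-- Bezout for finset gcd inside the additive closure. -/
lemma exists_diff_eq_gcd (s : Finset ℕ) (hs : s.Nonempty) :
    ∃ u v : ℕ, u ∈ AddSubmonoid.closure (s : Set ℕ) ∧
      v ∈ AddSubmonoid.closure (s : Set ℕ) ∧ (u : ℤ) - v = s.gcd id := by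
  induction hs using Finset.Nonempty.cons_induction with
  | singleton a =>
      exact ⟨a, 0, AddSubmonoid.subset_closure (by simp),
        zero_mem _, by simp [Finset.gcd_singleton]⟩
  | cons a s ha hs ih =>
      obtain ⟨u, v, hu, hv, huv⟩ := ih
      have hmono : AddSubmonoid.closure (s : Set ℕ) ≤
          AddSubmonoid.closure ((Finset.cons a s ha : Finset ℕ) : Set ℕ) :=
        AddSubmonoid.closure_mono (by simp [Finset.subset_iff])
      have haM : (a : ℕ) ∈ AddSubmonoid.closure ((Finset.cons a s ha : Finset ℕ) : Set ℕ) :=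
        AddSubmonoid.subset_closure (by simp)
      have hu' := hmono hu
      have hv' := hmono hv
      set M := AddSubmonoid.closure ((Finset.cons a s ha : Finset ℕ) : Set ℕ)
      -- Bezout: gcd a (s.gcd id) = a * x + (s.gcd id) * y
      set d : ℕ := s.gcd id
      set x : ℤ := Nat.gcdA a d
      set y : ℤ := Nat.gcdB a d
      have hbez : ((Nat.gcd a d : ℕ) : ℤ) = a * x + d * y := Nat.gcd_eq_gcd_ab a d
      refine ⟨x.toNat * a + y.toNat * u + (-y).toNat * v,
              (-x).toNat * a + y.toNat * v + (-y).toNat * u, ?_, ?_, ?_⟩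
      · exact add_mem (add_mem (nsmul_mem haM _) (nsmul_mem hu' _)) (nsmul_mem hv' _)
      · exact add_mem (add_mem (nsmul_mem haM _) (nsmul_mem hv' _)) (nsmul_mem hu' _)
      · have hgc : (Finset.cons a s ha).gcd id = Nat.gcd a d := by
          rw [Finset.cons_eq_insert, Finset.gcd_insert]; rfl
        push_cast
        rw [hgc, hbez]
        have hx : (x.toNat : ℤ) - (-x).toNat = x := by
          omega
        have hy : (y.toNat : ℤ) - (-y).toNat = y := by omega
        have : ((d : ℤ)) = u - v := huv.symm
        nlinarith [hx, hy, this]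

/-- Every element of ⟨P⟩ is a multiple of g = gcd(P), and all sufficiently
large multiples of g belong to ⟨P⟩. -/
theorem closure_multiples_of_gcd
    (P : Finset ℕ) (hP : P.Nonempty) (hPpos : ∀ p ∈ P, 0 < p) :
    (∀ x ∈ AddSubmonoid.closure (P : Set ℕ), P.gcd id ∣ x) ∧
      ∃ N : ℕ, ∀ x : ℕ, P.gcd id ∣ x → N ≤ x →
        x ∈ AddSubmonoid.closure (P : Set ℕ) := by
  set g := P.gcd id with hg
  have part1 : ∀ x ∈ AddSubmonoid.closure (P : Set ℕ), g ∣ x := by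
    intro x hx
    induction hx using AddSubmonoid.closure_induction with
    | mem p hp => exact Finset.gcd_dvd (by simpa using hp)
    | zero => exact dvd_zero g
    | add a b _ _ ha hb => exact dvd_add ha hb
  refine ⟨part1, ?_⟩
  obtain ⟨p₀, hp₀⟩ := hP
  have hgpos : 0 < g := by
    rcases Nat.eq_zero_or_pos g with h | h
    · have : p₀ = 0 := Nat.eq_zero_of_zero_dvd (h ▸ Finset.gcd_dvd hp₀)
      exact absurd (hPpos p₀ hp₀) (by omega)
    · exact h
  obtain ⟨u, v, hu, hv, huv⟩ := exists_diff_eq_gcd P ⟨p₀, hp₀⟩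
  rw [← hg] at huv
  obtain ⟨k, hk⟩ := part1 v hv
  rcases Nat.eq_zero_or_pos k with hk0 | hkpos
  · -- v = 0, so u = g
    subst hk0
    simp at hk
    subst hk
    have hug : u = g := by omega
    refine ⟨0, fun x hx _ => ?_⟩
    obtain ⟨m, hm⟩ := hx
    rw [hm, ← hug, mul_comm]
    exact nsmul_mem hu m
  · refine ⟨k * k * g, fun x hx hxN => ?_⟩
    obtain ⟨n, hn⟩ := hx
    have hnk : k * k ≤ n := by
      by_contra h
      push_neg at h
      have : x < k * k * g := by rw [hn]; nlinarith
      omega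
    set q := n / k
    set r := n % k
    have hrk : r < k := Nat.mod_lt _ hkpos
    have hqk : k ≤ q := Nat.le_div_iff_mul_le hkpos |>.2 (by nlinarith)
    have hnqr : n = q * k + r := by rw [mul_comm]; exact (Nat.div_add_mod n k).symm
    have hx_eq : x = (q - r) * v + r * u := by
      have h1 : (x : ℤ) = g * n := by exact_mod_cast hn
      have h2 : (v : ℤ) = g * k := by exact_mod_cast hk
      have h3 : (u : ℤ) = v + g := by omega
      have h4 : (n : ℤ) = q * k + r := by exact_mod_cast hnqr
      have h5 : ((q - r : ℕ) : ℤ) = (q : ℤ) - r := by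
        have : r ≤ q := le_trans (le_of_lt hrk) hqk
        exact_mod_cast Int.ofNat_sub this
      have : (x : ℤ) = ((q - r : ℕ) : ℤ) * v + r * u := by
        rw [h5, h1, h2, h3, h4]; ring_nf; nlinarith [h2]
      exact_mod_cast this
    rw [hx_eq]
    exact add_mem (nsmul_mem hv _) (nsmul_mem hu _)
end

section
/- Let f = M₁ ∨ … ∨ M_m be a DNF formula over disjoint variable sets X₁ = {x₁₁,…,x₁ₙ} and X₂ = {x₂₁,…,x₂ₙ}, where no monomial contains the same variable twice. For i ∈ Fin n and j ∈ Fin m, let b̄₁ᵢ[j] = 0 iff x₁ᵢ occurs positively in M_j, and b̄'₁ᵢ[j] = 0 iff x₁ᵢ occurs negatively in M_j. Given y ∈ L(E₁) := { n·1 + ∑ i, c i | ∀ i, c i ∈ {b̄₁ᵢ, b̄'₁ᵢ} }, define A₁ : X₁ → Bool by A₁(x₁ᵢ) = false if c i = b̄₁ᵢ and A₁(x₁ᵢ) = true if c i = b̄'₁ᵢ. Then for every j: y[j] = 2n if and only if A₁ does not annul M_j (i.e., A₁ sets no X₁-literal of M_j to false). -/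
/-- Claim 1 of the Stockmeyer-style reduction: for y ∈ L(E₁) determined by the
choice function d (the assignment A₁), a coordinate y[j] equals 2n iff A₁ does
not annul the monomial M_j. Here `pos j i` (resp. `neg j i`) indicates that the
variable x₁ᵢ occurs positively (resp. negatively) in M_j. -/
theorem claim1_type_of_assignment
    (n m : ℕ) (hn : 1 ≤ n) (hm : 1 ≤ m)
    (pos neg : Fin m → Fin n → Bool)
    (hnodup : ∀ j i, ¬(pos j i = true ∧ neg j i = true))
    (d : Fin n → Bool)
    (c : Fin n → (Fin m → ℕ))
    (hc : ∀ i, c i = if d i then (fun j => if neg j i then 0 else 1)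
                     else (fun j => if pos j i then 0 else 1))
    (y : Fin m → ℕ) (hy : y = (fun _ => n) + ∑ i, c i) :
    ∀ j : Fin m,
      y j = 2 * n ↔
        ¬ ∃ i : Fin n, (pos j i = true ∧ d i = false) ∨
                       (neg j i = true ∧ d i = true) := by
  intro j
  subst hy
  have hcj : ∀ i, c i j = if d i then (if neg j i then 0 else 1)
      else (if pos j i then 0 else 1) := by
    intro i; rw [hc i]; by_cases h : d i <;> simp [h]
  have hyj : ((fun _ => n) + ∑ i, c i : Fin m → ℕ) j = n + ∑ i, c i j := by
    simp [Finset.sum_apply]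
  rw [hyj]
  have hle : ∀ i ∈ Finset.univ, c i j ≤ 1 := by
    intro i _
    rw [hcj i]
    by_cases h : d i <;> by_cases h2 : neg j i <;> by_cases h3 : pos j i <;>
      simp [h, h2, h3]
  have hsum_le : ∑ i, c i j ≤ n := by
    calc ∑ i, c i j ≤ ∑ _i : Fin n, 1 := Finset.sum_le_sum hle
    _ = n := by simp
  constructor
  · intro h hex
    obtain ⟨i, hi⟩ := hex
    have hzero : c i j = 0 := by
      rw [hcj i]
      rcases hi with ⟨hp, hd⟩ | ⟨hng, hd⟩
      · simp [hd, hp]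
      · simp [hd, hng]
    have hlt : ∑ i, c i j < n := by
      calc ∑ i, c i j = ∑ i ∈ Finset.univ.erase i, c i j + c i j :=
            (Finset.sum_erase_add _ _ (Finset.mem_univ i)).symm
      _ = ∑ i ∈ Finset.univ.erase i, c i j := by rw [hzero, add_zero]
      _ ≤ ∑ _i ∈ Finset.univ.erase i, 1 :=
            Finset.sum_le_sum (fun a ha => hle a (Finset.mem_univ a))
      _ = (Finset.univ.erase i).card := by simp
      _ < n := by
            rw [Finset.card_erase_of_mem (Finset.mem_univ i)]
            simp
            omega
    omega
  · intro h
    have hall : ∀ i, c i j = 1 := by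
      intro i
      rw [hcj i]
      by_cases hd : d i
      · have : ¬ (neg j i = true) := fun hng => h ⟨i, Or.inr ⟨hng, hd⟩⟩
        simp [hd, this]
      · have : ¬ (pos j i = true) := fun hp => h ⟨i, Or.inl ⟨hp, by simpa using hd⟩⟩
        simp [hd, this]
    have : ∑ i, c i j = n := by simp [hall]
    omega
end

section
/- Let s, m, k ∈ ℕ with vectors p₁, …, p_k ∈ ℕ^m of the block form pᵢ = (Bᵢ, eᵢ', 0, 0) ∈ ℕ^{m} × ℕ^{s} × ℕ^{s} × ℕ^{m} where each Bᵢ ∈ {0,1}^m and eᵢ' is a standard basis vector of ℕ^s (with k = 2s, two periods per basis vector), and let c = (0, 2·1, 1, 1) in the same block decomposition. Then for any coefficient vector a : Fin k → ℕ, the vector c + ∑ i, a i · pᵢ has first control section equal to the all-3 vector 3·1 ∈ ℕ^s if and only if for each basis index j ∈ Fin s, the two coefficients of the two periods associated with j sum to exactly 1. -/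
/-- Structural property of the first control section in the reduction of
Theorem 3.1: the section equals the all-3 vector iff, for each basis index,
the two associated coefficients sum to exactly 1. -/
theorem control_section_characterization
    (s m : ℕ)
    (B : Fin s → Fin 2 → (Fin m → ℕ)) (hB : ∀ i j l, B i j l ≤ 1)
    (p : Fin s → Fin 2 →
      ((Fin m → ℕ) × (Fin s → ℕ) × (Fin s → ℕ) × (Fin m → ℕ)))
    (hp : ∀ i j, p i j = (B i j, fun l => if l = i then 1 else 0, 0, 0))
    (c : (Fin m → ℕ) × (Fin s → ℕ) × (Fin s → ℕ) × (Fin m → ℕ))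
    (hc : c = (0, fun _ => 2, fun _ => 1, fun _ => 1))
    (a : Fin s → Fin 2 → ℕ) :
    (c + ∑ i, ∑ j, a i j • p i j).2.1 = (fun _ => 3) ↔
      ∀ i : Fin s, a i 0 + a i 1 = 1 := by
  subst hc
  have key : ∀ l : Fin s,
      (((0, fun _ => 2, fun _ => 1, fun _ => 1) :
        (Fin m → ℕ) × (Fin s → ℕ) × (Fin s → ℕ) × (Fin m → ℕ))
        + ∑ i, ∑ j, a i j • p i j).2.1 l = 2 + (a l 0 + a l 1) := by
    intro l
    simp only [hp, Prod.snd_sum, Prod.fst_sum, Prod.smul_mk, smul_ite,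
      Prod.mk_add_mk, Prod.snd_add, Prod.fst_add, Finset.sum_apply,
      Pi.add_apply, Pi.smul_apply, smul_eq_mul, mul_ite, mul_one, mul_zero]
    rw [Finset.sum_comm]
    have : ∀ j : Fin 2, (∑ i, if l = i then a i j else 0) = a l j := by
      intro j
      simp [Finset.sum_ite_eq]
    rw [Fin.sum_univ_two, this, this]
  constructor
  · intro h i
    have := congrFun h i
    rw [key i] at this
    omega
  · intro h
    funext l
    rw [key l, h l]
end
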